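/- arXiv:2010.09499 — 2 statements merged into one kernel-verified Lean document; each statement's English description precedes it below -/
import Mathlib

section
/- Define f : [0,1] → ℝ by: f(x) = x + (2^{−2n} − 2^{−n}) if x ∈ (2^{−n} − 2^{−2n}, 2^{−n} − 2^{−2n−1}], f(x) = 2^{−2n−1} if x ∈ (2^{−n} − 2^{−2n−1}, 2^{−n} + 2^{−2n−1}), f(x) = −x + (2^{−2n} + 2^{−n}) if x ∈ [2^{−n} + 2^{−2n−1}, 2^{−n} + 2^{−2n}), for n ≥ 3, and f(x) = 0 if x is in no interval J_n = (2^{−n} − 2^{−2n}, 2^{−n} + 2^{−2n}) with n ≥ 3. Then f is well defined (the intervals J_n, n ≥ 3, are pairwise disjoint), continuous, and 1-Lipschitz: |f(x) − f(y)| ≤ |x − y| for all x, y ∈ [0,1]. -/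
/-- The interval `J n = (2^{-n} - 2^{-2n}, 2^{-n} + 2^{-2n})`. -/
noncomputable def Jint (n : ℕ) : Set ℝ :=
  Set.Ioo ((2:ℝ) ^ (-(n : ℤ)) - (2:ℝ) ^ (-(2 * n : ℤ)))
          ((2:ℝ) ^ (-(n : ℤ)) + (2:ℝ) ^ (-(2 * n : ℤ)))

/-!
On each `J n` the function `f` is the trapezoid of height `2^{-2n-1}` over `J n`, namely
`max 0 (min (2^{-2n} - |x - 2^{-n}|) 2^{-2n-1})`, which is 1-Lipschitz on all of `ℝ`.
The intervals `J n` are pairwise disjoint, so on `[0,1]` the function `f` is the pointwise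
supremum of these trapezoids, and a bounded supremum of 1-Lipschitz functions is 1-Lipschitz.
-/

open Set
open scoped NNReal

noncomputable def trapezoid (p w x : ℝ) : ℝ := max 0 (min (w - |x - p|) (w / 2))

section Trapezoid

variable {p w x : ℝ}

theorem lipschitzWith_trapezoid (p w : ℝ) : LipschitzWith 1 (trapezoid p w) := by
  have h : LipschitzWith 1 fun x : ℝ => w - |x - p| := by
    simpa [Real.dist_eq] using (LipschitzWith.const w).sub (LipschitzWith.dist_left p)
  exact (h.min_const (w / 2)).const_max 0

theorem trapezoid_nonneg (p w x : ℝ) : 0 ≤ trapezoid p w x := le_max_left _ _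

theorem trapezoid_le (p w x : ℝ) : trapezoid p w x ≤ max 0 (w / 2) :=
  max_le_max le_rfl (min_le_right _ _)

theorem trapezoid_eq_zero (hx : x ∉ Ioo (p - w) (p + w)) : trapezoid p w x = 0 := by
  have : w ≤ |x - p| := by
    by_contra! h
    exact hx ⟨by linarith [neg_abs_le (x - p)], by linarith [le_abs_self (x - p)]⟩
  exact max_eq_left (min_le_of_left_le (by linarith))

theorem trapezoid_of_mem_Ioc (hx : x ∈ Ioc (p - w) (p - w / 2)) :
    trapezoid p w x = x + (w - p) := by
  rw [trapezoid, abs_of_neg (by linarith [hx.2, hx.1] : x - p < 0),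
    min_eq_left (by linarith [hx.2]), max_eq_right (by linarith [hx.1])]
  ring

theorem trapezoid_of_mem_Ioo (hx : x ∈ Ioo (p - w / 2) (p + w / 2)) :
    trapezoid p w x = w / 2 := by
  have : |x - p| < w / 2 := abs_sub_lt_iff.2 ⟨by linarith [hx.2], by linarith [hx.1]⟩
  rw [trapezoid, min_eq_right (by linarith), max_eq_right (by linarith [hx.1, hx.2])]

theorem trapezoid_of_mem_Ico (hx : x ∈ Ico (p + w / 2) (p + w)) :
    trapezoid p w x = -x + (w + p) := by
  rw [trapezoid, abs_of_pos (by linarith [hx.2, hx.1] : 0 < x - p),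
    min_eq_left (by linarith [hx.1]), max_eq_right (by linarith [hx.2])]
  ring

theorem eq_trapezoid_of_pieces {f : ℝ → ℝ}
    (h₁ : ∀ x ∈ Ioc (p - w) (p - w / 2), f x = x + (w - p))
    (h₂ : ∀ x ∈ Ioo (p - w / 2) (p + w / 2), f x = w / 2)
    (h₃ : ∀ x ∈ Ico (p + w / 2) (p + w), f x = -x + (w + p))
    (hx : x ∈ Ioo (p - w) (p + w)) : f x = trapezoid p w x := by
  rcases le_or_gt x (p - w / 2) with hl | hl
  · have hx' : x ∈ Ioc (p - w) (p - w / 2) := ⟨hx.1, hl⟩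
    rw [h₁ x hx', trapezoid_of_mem_Ioc hx']
  rcases lt_or_ge x (p + w / 2) with hr | hr
  · have hx' : x ∈ Ioo (p - w / 2) (p + w / 2) := ⟨hl, hr⟩
    rw [h₂ x hx', trapezoid_of_mem_Ioo hx']
  · have hx' : x ∈ Ico (p + w / 2) (p + w) := ⟨hr, hx.2⟩
    rw [h₃ x hx', trapezoid_of_mem_Ico hx']

end Trapezoid

theorem lipschitzWith_ciSup {α ι : Type*} [PseudoMetricSpace α] [Nonempty ι] {K : ℝ≥0}
    {F : ι → α → ℝ} (hF : ∀ i, LipschitzWith K (F i))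
    (hbdd : ∀ x, BddAbove (range fun i => F i x)) :
    LipschitzWith K fun x => ⨆ i, F i x :=
  LipschitzWith.of_le_add_mul K fun x y => ciSup_le fun i =>
    ((hF i).le_add_mul x y).trans (by gcongr; exact le_ciSup (hbdd y) i)

theorem ciSup_eq_of_forall_ne_eq_zero {ι : Type*} {F : ι → ℝ} {i : ι} (hi : 0 ≤ F i)
    (hF : ∀ j ≠ i, F j = 0) : ⨆ j, F j = F i := by
  have hle : ∀ j, F j ≤ F i := fun j => by
    by_cases hj : j = i
    · rw [hj]
    · rw [hF j hj]; exact hi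
  have : Nonempty ι := ⟨i⟩
  exact le_antisymm (ciSup_le hle) (le_ciSup ⟨F i, by rintro _ ⟨j, rfl⟩; exact hle j⟩ i)

theorem two_zpow_sub_one (z : ℤ) : (2:ℝ) ^ (z - 1) = 2 ^ z / 2 := by
  rw [zpow_sub_one₀ two_ne_zero, div_eq_mul_inv]

theorem two_zpow_neg_two_mul (n : ℕ) : (2:ℝ) ^ (-(2 * n : ℤ)) = ((2:ℝ) ^ (-(n : ℤ))) ^ 2 := by
  rw [← zpow_natCast, ← zpow_mul]; ring_nf

theorem Jint_disjoint_of_lt {m n : ℕ} (hm : 2 ≤ m) (hmn : m < n) :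
    Disjoint (Jint m) (Jint n) := by
  have hq : (2:ℝ) ^ (-(m : ℤ)) ≤ 1 / 4 := by
    calc (2:ℝ) ^ (-(m : ℤ)) ≤ 2 ^ (-2 : ℤ) := zpow_le_zpow_right₀ one_le_two (by omega)
      _ = 1 / 4 := by norm_num
  have hr : (2:ℝ) ^ (-(n : ℤ)) ≤ 2 ^ (-(m : ℤ)) / 2 := by
    rw [← two_zpow_sub_one]
    exact zpow_le_zpow_right₀ one_le_two (by omega)
  have hr0 : (0:ℝ) < 2 ^ (-(n : ℤ)) := by positivity
  refine Set.disjoint_left.2 fun x hxm hxn => ?_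
  -- with `q = 2^{-m}`, `r = 2^{-n}`: `r + r^2 ≤ q/2 + q^2/4 ≤ q - q^2` as `q ≤ 1/4`
  rw [Jint, two_zpow_neg_two_mul] at hxm hxn
  nlinarith [hxm.1, hxn.2]

theorem Jint_disjoint {m n : ℕ} (hm : 2 ≤ m) (hn : 2 ≤ n) (hmn : m ≠ n) :
    Disjoint (Jint m) (Jint n) := by
  rcases hmn.lt_or_gt with h | h
  · exact Jint_disjoint_of_lt hm h
  · exact (Jint_disjoint_of_lt hn h).symm

noncomputable def bump (n : ℕ) : ℝ → ℝ :=
  trapezoid ((2:ℝ) ^ (-(n : ℤ))) ((2:ℝ) ^ (-(2 * n : ℤ)))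

noncomputable def bumpSup (x : ℝ) : ℝ := ⨆ k : ℕ, bump (k + 3) x

theorem bump_eq_zero {n : ℕ} {x : ℝ} (hx : x ∉ Jint n) : bump n x = 0 :=
  trapezoid_eq_zero hx

theorem bump_le_one (n : ℕ) (x : ℝ) : bump n x ≤ 1 := by
  have hw : (2:ℝ) ^ (-(2 * n : ℤ)) ≤ 1 := zpow_le_one_of_nonpos₀ one_le_two (by omega)
  exact (trapezoid_le _ _ x).trans (max_le zero_le_one (by linarith))

theorem lipschitzWith_bumpSup : LipschitzWith 1 bumpSup :=
  lipschitzWith_ciSup (fun k => lipschitzWith_trapezoid _ _)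
    fun x => ⟨1, by rintro _ ⟨k, rfl⟩; exact bump_le_one _ x⟩

theorem bumpSup_eq_bump {n : ℕ} {x : ℝ} (hn : 3 ≤ n) (hx : x ∈ Jint n) :
    bumpSup x = bump n x := by
  obtain ⟨k, rfl⟩ := Nat.exists_eq_add_of_le' hn
  refine ciSup_eq_of_forall_ne_eq_zero (trapezoid_nonneg _ _ _) fun j hj => bump_eq_zero ?_
  exact Set.disjoint_left.1 (Jint_disjoint (by omega) (by omega) (by omega)).symm hx

theorem bumpSup_eq_zero {x : ℝ} (hx : ∀ n, 3 ≤ n → x ∉ Jint n) : bumpSup x = 0 := by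
  simp only [bumpSup, bump_eq_zero (hx _ (Nat.le_add_left 3 _)), Real.iSup_const_zero]

/-- the piecewise function f built from the bumps on the intervals
J_n (n ≥ 3) is well defined (the J_n are pairwise disjoint), continuous on [0,1],
and 1-Lipschitz. -/
theorem stmt_13 (f : ℝ → ℝ)
    (hf1 : ∀ n : ℕ, 3 ≤ n → ∀ x ∈ Set.Ioc ((2:ℝ) ^ (-(n : ℤ)) - (2:ℝ) ^ (-(2 * n : ℤ)))
        ((2:ℝ) ^ (-(n : ℤ)) - (2:ℝ) ^ (-(2 * n : ℤ) - 1)),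
        f x = x + ((2:ℝ) ^ (-(2 * n : ℤ)) - (2:ℝ) ^ (-(n : ℤ))))
    (hf2 : ∀ n : ℕ, 3 ≤ n → ∀ x ∈ Set.Ioo ((2:ℝ) ^ (-(n : ℤ)) - (2:ℝ) ^ (-(2 * n : ℤ) - 1))
        ((2:ℝ) ^ (-(n : ℤ)) + (2:ℝ) ^ (-(2 * n : ℤ) - 1)),
        f x = (2:ℝ) ^ (-(2 * n : ℤ) - 1))
    (hf3 : ∀ n : ℕ, 3 ≤ n → ∀ x ∈ Set.Ico ((2:ℝ) ^ (-(n : ℤ)) + (2:ℝ) ^ (-(2 * n : ℤ) - 1))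
        ((2:ℝ) ^ (-(n : ℤ)) + (2:ℝ) ^ (-(2 * n : ℤ))),
        f x = -x + ((2:ℝ) ^ (-(2 * n : ℤ)) + (2:ℝ) ^ (-(n : ℤ))))
    (hf0 : ∀ x ∈ Set.Icc (0:ℝ) 1, (∀ n : ℕ, 3 ≤ n → x ∉ Jint n) → f x = 0) :
    (∀ m n : ℕ, 3 ≤ m → 3 ≤ n → m ≠ n → Disjoint (Jint m) (Jint n)) ∧
    ContinuousOn f (Set.Icc (0:ℝ) 1) ∧
    ∀ x ∈ Set.Icc (0:ℝ) 1, ∀ y ∈ Set.Icc (0:ℝ) 1, |f x - f y| ≤ |x - y| := by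
  simp only [two_zpow_sub_one] at hf1 hf2 hf3
  have hfg : EqOn f bumpSup (Icc 0 1) := by
    intro x hx
    by_cases hJ : ∃ n, 3 ≤ n ∧ x ∈ Jint n
    · obtain ⟨n, hn, hxn⟩ := hJ
      rw [bumpSup_eq_bump hn hxn]
      exact eq_trapezoid_of_pieces (hf1 n hn) (hf2 n hn) (hf3 n hn) hxn
    · push Not at hJ
      rw [hf0 x hx hJ, bumpSup_eq_zero hJ]
  refine ⟨fun m n hm hn => Jint_disjoint (by omega) (by omega), ?_, ?_⟩
  · exact lipschitzWith_bumpSup.continuous.continuousOn.congr hfg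
  · intro x hx y hy
    rw [hfg hx, hfg hy, ← Real.dist_eq, ← Real.dist_eq]
    simpa using lipschitzWith_bumpSup.dist_le_mul x y
end

section
/- For a continuous function f : [0,1] → ℝ and ε > 0 with 0 < ε < 1/2, suppose 1 − ε ≤ f(x) < 1 for all x ∈ [0,1]. Then: (1) sup_x |f(x)| < 1; (2) for every continuous p : [0,1] → ℝ with sup_x |p(x)| > ε and sup_x |f(x) − p(x)| < 1, one has sup_x |f(x) + p(x)| ≥ 1. Conversely, if f is continuous with 0 < f(x) < 1 for all x and f(z) < 1 − ε for some z, then there exists a continuous p with sup_x |p(x)| > ε, sup_x |f(x) − p(x)| < 1, and sup_x |f(x) + p(x)| < 1. -/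
/-!
If `1 - ε ≤ f`, a point where `|p| > ε` pushes `f + p` or `f - p` above `1`, since
`max |a - b| |a + b| ≥ a + |b|`; so `‖f - p‖ < 1` forces `‖f + p‖ > 1`.
If instead `f` dips below `1 - ε` at `z`, the perturbation `p = t • (1 - f)` with
`ε / (1 - f z) < t < 1` works: `f + p = (1 - t) f + t` and `f - p = (1 + t) f - t` stay
in `(-1, 1)`, while `|p z| = t (1 - f z) > ε`.
-/

open ContinuousMap

lemma add_abs_le_max_abs_sub_abs_add (a b : ℝ) : a + |b| ≤ max |a - b| |a + b| := by
  rcases le_total 0 b with hb | hb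
  · rw [abs_of_nonneg hb]
    exact (le_abs_self _).trans (le_max_right _ _)
  · rw [abs_of_nonpos hb, ← sub_eq_add_neg]
    exact (le_abs_self _).trans (le_max_left _ _)

namespace ContinuousMap

variable {X : Type*} [TopologicalSpace X] [CompactSpace X]

lemma exists_lt_abs_apply_of_lt_norm {p : C(X, ℝ)} {r : ℝ} (hr : 0 ≤ r) (h : r < ‖p‖) :
    ∃ x, r < |p x| := by
  by_contra! hp
  exact h.not_ge <| (norm_le p hr).2 hp

lemma norm_lt_one_of_forall_mem_Ioo {g : C(X, ℝ)} (hg : ∀ x, -1 < g x ∧ g x < 1) :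
    ‖g‖ < 1 :=
  (norm_lt_iff g one_pos).2 fun x => abs_lt.2 (hg x)

lemma one_lt_max_norm_sub_norm_add {f p : C(X, ℝ)} {ε : ℝ} (hf : ∀ x, 1 - ε ≤ f x)
    (hε : 0 ≤ ε) (hp : ε < ‖p‖) : 1 < max ‖f - p‖ ‖f + p‖ := by
  obtain ⟨x, hx⟩ := exists_lt_abs_apply_of_lt_norm hε hp
  calc 1 < f x + |p x| := by linarith [hf x]
    _ ≤ max |f x - p x| |f x + p x| := add_abs_le_max_abs_sub_abs_add _ _
    _ ≤ max ‖f - p‖ ‖f + p‖ :=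
      max_le_max ((f - p).norm_coe_le_norm x) ((f + p).norm_coe_le_norm x)

section Perturbation

variable {f : C(X, ℝ)} {t : ℝ}

lemma norm_sub_smul_one_sub_lt_one (hf : ∀ x, 0 < f x ∧ f x < 1) (ht₀ : 0 ≤ t) (ht₁ : t < 1) :
    ‖f - t • (1 - f)‖ < 1 :=
  norm_lt_one_of_forall_mem_Ioo fun x => by
    have := hf x
    simp only [sub_apply, smul_apply, one_apply, smul_eq_mul]
    constructor <;> nlinarith

lemma norm_add_smul_one_sub_lt_one (hf : ∀ x, 0 < f x ∧ f x < 1) (ht₀ : 0 ≤ t) (ht₁ : t < 1) :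
    ‖f + t • (1 - f)‖ < 1 :=
  norm_lt_one_of_forall_mem_Ioo fun x => by
    have := hf x
    simp only [add_apply, sub_apply, smul_apply, one_apply, smul_eq_mul]
    constructor <;> nlinarith

lemma mul_one_sub_apply_le_norm_smul_one_sub (z : X) :
    t * (1 - f z) ≤ ‖t • (1 - f)‖ :=
  (le_abs_self _).trans <| by
    simpa [Real.norm_eq_abs] using (t • (1 - f)).norm_coe_le_norm z

end Perturbation

end ContinuousMap

/-- characterization of functions with 1 − ε ≤ f < 1 in C[0,1]. -/
theorem stmt_17 (ε : ℝ) (hε1 : 0 < ε) (hε2 : ε < 1/2) :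
    (∀ f : C(Set.Icc (0:ℝ) 1, ℝ), (∀ x, 1 - ε ≤ f x ∧ f x < 1) →
      ‖f‖ < 1 ∧
      ∀ p : C(Set.Icc (0:ℝ) 1, ℝ), ε < ‖p‖ → ‖f - p‖ < 1 → 1 ≤ ‖f + p‖) ∧
    (∀ f : C(Set.Icc (0:ℝ) 1, ℝ), (∀ x, 0 < f x ∧ f x < 1) →
      (∃ z, f z < 1 - ε) →
      ∃ p : C(Set.Icc (0:ℝ) 1, ℝ), ε < ‖p‖ ∧ ‖f - p‖ < 1 ∧ ‖f + p‖ < 1) := by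
  refine ⟨fun f hf => ⟨?_, fun p hp hfp => ?_⟩, ?_⟩
  · exact norm_lt_one_of_forall_mem_Ioo fun x => ⟨by linarith [(hf x).1], (hf x).2⟩
  · have := one_lt_max_norm_sub_norm_add (fun x => (hf x).1) hε1.le hp
    exact (lt_max_iff.1 this).resolve_left hfp.not_gt |>.le
  · rintro f hf ⟨z, hz⟩
    have hgap : 0 < 1 - f z := by linarith
    obtain ⟨t, hεt, ht₁⟩ := exists_between ((div_lt_one hgap).2 (by linarith : ε < 1 - f z))
    have ht₀ : 0 ≤ t := (div_pos hε1 hgap).le.trans hεt.le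
    refine ⟨t • (1 - f), ?_, norm_sub_smul_one_sub_lt_one hf ht₀ ht₁,
      norm_add_smul_one_sub_lt_one hf ht₀ ht₁⟩
    exact ((div_lt_iff₀ hgap).1 hεt).trans_le (mul_one_sub_apply_le_norm_smul_one_sub z)
end
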